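/- arXiv:1304.5016 — 6 statements merged into one kernel-verified Lean document; each statement's English description precedes it below -/
import Mathlib

section
/- Let k > 0, a > 0 and b ∈ ℝ. Then (Γ(2k) / (Γ(k)² · (2a)^{2k−1})) · ∫_{−a}^{a} e^{bν} (a² − ν²)^{k−1} dν = Γ(k+1/2) · Σ_{n=0}^{∞} (ab/2)^{2n} / (n! · Γ(n + k + 1/2)). (In the paper's notation this computes the Dunkl–Bessel function of type A₁ as J_{k,2}(μ,λ) = 𝒥_{k−1/2}(2μ₁λ₁).) -/
open MeasureTheory Real Set
open scoped Nat

/-!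
Expand `e^{bν}` in its power series and integrate termwise: the weight `(a² - ν²)^(k-1)` is
integrable on `(-a, a)` and `|ν| ≤ a` there. The weight is even, so the odd moments vanish, and
the substitution `ν = a √t` turns the even moments into Beta integrals
`a^(2n+2k-1) B(n + 1/2, k)`. Legendre's duplication formula, at `s = k` and at `s = n + 1/2`,
then matches the coefficients with those of the series on the right.
-/

theorem integral_Ioo_rpow_mul_one_sub_rpow {u v : ℝ} (hu : 0 < u) (hv : 0 < v) :
    ∫ x in Ioo (0 : ℝ) 1, x ^ (u - 1) * (1 - x) ^ (v - 1) = Gamma u * Gamma v / Gamma (u + v) := by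
  have h := Complex.betaIntegral_eq_Gamma_mul_div u v (by simpa) (by simpa)
  rw [← Complex.ofReal_add, Complex.Gamma_ofReal, Complex.Gamma_ofReal, Complex.Gamma_ofReal,
    ← Complex.ofReal_mul, ← Complex.ofReal_div, Complex.betaIntegral,
    intervalIntegral.integral_of_le zero_le_one, integral_Ioc_eq_integral_Ioo] at h
  rw [← Complex.ofReal_inj, ← h, ← integral_complex_ofReal]
  refine setIntegral_congr_fun measurableSet_Ioo fun x hx => ?_
  push_cast
  rw [Complex.ofReal_cpow hx.1.le, Complex.ofReal_cpow (sub_nonneg.2 hx.2.le)]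
  push_cast; ring_nf

theorem integral_Ioo_eq_integral_Ioo_comp_mul_sqrt {a : ℝ} (ha : 0 < a) (f : ℝ → ℝ) :
    ∫ x in Ioo 0 a, f x = ∫ t in Ioo 0 1, a / (2 * √t) * f (a * √t) := by
  have himage : (fun t => a * √t) '' Ioo 0 1 = Ioo 0 a := by
    ext x
    constructor
    · rintro ⟨t, ⟨ht0, ht1⟩, rfl⟩
      exact ⟨by positivity, mul_lt_of_lt_one_right ha ((sqrt_lt' one_pos).2 (by simpa using ht1))⟩
    · rintro ⟨hx0, hxa⟩
      refine ⟨(x / a) ^ 2, ⟨by positivity, ?_⟩, ?_⟩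
      · exact pow_lt_one₀ (by positivity) ((div_lt_one ha).2 hxa) two_ne_zero
      · simp only [sqrt_sq (div_pos hx0 ha).le]; field_simp
  have hderiv : ∀ t ∈ Ioo (0 : ℝ) 1,
      HasDerivWithinAt (fun t => a * √t) (a * (1 / (2 * √t))) (Ioo 0 1) t := fun t ht =>
    ((hasDerivAt_sqrt ht.1.ne').const_mul a).hasDerivWithinAt
  have hinj : InjOn (fun t => a * √t) (Ioo 0 1) := fun s hs t ht hst => by
    rw [← sq_sqrt hs.1.le, ← sq_sqrt ht.1.le, mul_left_cancel₀ ha.ne' hst]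
  rw [← himage, integral_image_eq_integral_abs_deriv_smul measurableSet_Ioo hderiv hinj]
  refine setIntegral_congr_fun measurableSet_Ioo fun t ht => ?_
  rw [abs_of_pos (by have := sqrt_pos.2 ht.1; positivity), smul_eq_mul, mul_one_div]

section Reflection

variable {E : Type*} [NormedAddCommGroup E] {f : ℝ → E}

theorem setIntegral_Ioo_comp_neg [NormedSpace ℝ E] (f : ℝ → E) (c d : ℝ) :
    ∫ x in Ioo c d, f (-x) = ∫ x in Ioo (-d) (-c), f x := by
  simpa [← neg_Ioo] using
    (Measure.measurePreserving_neg volume).setIntegral_preimage_emb measurableEmbedding_neg f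
      (Ioo (-d) (-c))

theorem integrableOn_Ioo_comp_neg_iff {c d : ℝ} :
    IntegrableOn (fun x => f (-x)) (Ioo c d) ↔ IntegrableOn f (Ioo (-d) (-c)) := by
  simpa [← neg_Ioo, Function.comp_def] using
    (Measure.measurePreserving_neg volume).integrableOn_comp_preimage measurableEmbedding_neg
      (f := f) (s := Ioo (-d) (-c))

theorem setIntegral_Ioo_neg_self_of_odd [NormedSpace ℝ E] (hf : ∀ x, f (-x) = -f x) (a : ℝ) :
    ∫ x in Ioo (-a) a, f x = 0 := by
  have h := setIntegral_Ioo_comp_neg f (-a) a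
  simp only [hf, integral_neg, neg_neg] at h
  linear_combination (norm := module) (-(1 / 2 : ℝ)) • h

theorem Ioc_neg_zero_union_Ioo (a : ℝ) : Ioc (-a) 0 ∪ Ioo 0 a = Ioo (-a) a := by
  ext x
  simp only [mem_union, mem_Ioc, mem_Ioo]
  constructor
  · rintro (⟨h1, h2⟩ | ⟨h1, h2⟩) <;> constructor <;> linarith
  · rintro ⟨h1, h2⟩
    rcases le_or_gt x 0 with h | h
    exacts [Or.inl ⟨h1, h⟩, Or.inr ⟨h, h2⟩]

theorem integrableOn_Ioc_neg_zero_of_even (hf : ∀ x, f (-x) = f x) {a : ℝ}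
    (h : IntegrableOn f (Ioo 0 a)) : IntegrableOn f (Ioc (-a) 0) := by
  rw [integrableOn_Ioc_iff_integrableOn_Ioo, ← neg_zero, ← integrableOn_Ioo_comp_neg_iff]
  simpa only [hf] using h

theorem IntegrableOn.Ioo_neg_self_of_even (hf : ∀ x, f (-x) = f x) {a : ℝ}
    (h : IntegrableOn f (Ioo 0 a)) : IntegrableOn f (Ioo (-a) a) := by
  rw [← Ioc_neg_zero_union_Ioo]
  exact (integrableOn_Ioc_neg_zero_of_even hf h).union h

theorem setIntegral_Ioo_neg_self_of_even [NormedSpace ℝ E] (hf : ∀ x, f (-x) = f x) {a : ℝ}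
    (h : IntegrableOn f (Ioo 0 a)) :
    ∫ x in Ioo (-a) a, f x = (2 : ℝ) • ∫ x in Ioo 0 a, f x := by
  have hdisj : Disjoint (Ioc (-a) 0) (Ioo 0 a) :=
    disjoint_left.2 fun x hx hx' => hx.2.not_gt hx'.1
  rw [← Ioc_neg_zero_union_Ioo, setIntegral_union hdisj measurableSet_Ioo
    (integrableOn_Ioc_neg_zero_of_even hf h) h, integral_Ioc_eq_integral_Ioo, ← neg_zero,
    ← setIntegral_Ioo_comp_neg]
  simp only [hf, neg_zero, two_smul]

end Reflection

theorem hasSum_integral_exp_mul {μ : Measure ℝ} {w : ℝ → ℝ} {R : ℝ} (hw : Integrable w μ)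
    (hR : ∀ᵐ x ∂μ, |x| ≤ R) (b : ℝ) :
    HasSum (fun m : ℕ => b ^ m / m ! * ∫ x, x ^ m * w x ∂μ) (∫ x, exp (b * x) * w x ∂μ) := by
  set F : ℕ → ℝ → ℝ := fun m x => (b * x) ^ m / m ! * w x
  have hcoeff : ∀ m : ℕ, ∀ᵐ x ∂μ, ‖(b * x) ^ m / (m ! : ℝ)‖ ≤ (|b| * R) ^ m / m ! := fun m => by
    filter_upwards [hR] with x hx
    rw [norm_div, norm_pow, RCLike.norm_natCast, norm_mul, norm_eq_abs, norm_eq_abs]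
    gcongr
  have hF : ∀ m, Integrable (F m) μ := fun m =>
    hw.bdd_mul (by fun_prop) (hcoeff m)
  have hF_norm : ∀ m, ∫ x, ‖F m x‖ ∂μ ≤ (|b| * R) ^ m / m ! * ∫ x, ‖w x‖ ∂μ := fun m => by
    rw [← integral_const_mul]
    refine integral_mono_ae (hF m).norm (hw.norm.const_mul _) ?_
    filter_upwards [hcoeff m] with x hx
    rw [norm_mul]
    exact mul_le_mul_of_nonneg_right hx (norm_nonneg _)
  have hsum : Summable fun m => ∫ x, ‖F m x‖ ∂μ :=
    .of_nonneg_of_le (fun m => integral_nonneg fun x => norm_nonneg _) hF_norm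
      ((summable_pow_div_factorial _).mul_right _)
  have hexp : ∀ x, ∑' m, F m x = exp (b * x) * w x := fun x => by
    rw [tsum_mul_right, exp_eq_exp_ℝ, (NormedSpace.expSeries_div_hasSum_exp (b * x)).tsum_eq]
  have hterm : ∀ m : ℕ, ∫ x, F m x ∂μ = b ^ m / m ! * ∫ x, x ^ m * w x ∂μ := fun m => by
    rw [← integral_const_mul]
    congr 1 with x
    simp only [F, mul_pow]; ring
  simpa only [hexp, hterm] using hasSum_integral_of_summable_integral_norm hF hsum

section Moments

variable {k a : ℝ}

theorem integral_Ioo_rpow_mul_sq_sub_sq_rpow (hk : 0 < k) (ha : 0 < a) {p : ℝ} (hp : -1 < p) :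
    ∫ x in Ioo 0 a, x ^ p * (a ^ 2 - x ^ 2) ^ (k - 1) =
      a ^ (p + 2 * k - 1) / 2 * (Gamma ((p + 1) / 2) * Gamma k / Gamma ((p + 1) / 2 + k)) := by
  rw [integral_Ioo_eq_integral_Ioo_comp_mul_sqrt ha, ← integral_Ioo_rpow_mul_one_sub_rpow
    (by linarith) hk, ← integral_const_mul]
  refine setIntegral_congr_fun measurableSet_Ioo fun t ⟨ht0, ht1⟩ => ?_
  have hsqrt : 0 < √t := sqrt_pos.2 ht0
  have hbase : a ^ 2 - (a * √t) ^ 2 = a ^ 2 * (1 - t) := by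
    rw [mul_pow, sq_sqrt ht0.le]; ring
  have hsq : (a ^ 2) ^ (k - 1) = a ^ (2 * (k - 1)) := by
    rw [← rpow_natCast, ← rpow_mul ha.le]; norm_num
  have ha_exp : a ^ (p + 2 * k - 1) = a ^ p * a ^ (2 * (k - 1)) * a := by
    rw [show p + 2 * k - 1 = p + 2 * (k - 1) + 1 by ring, rpow_add ha, rpow_add ha, rpow_one]
  have ht_exp : t ^ ((p + 1) / 2 - 1) = (√t) ^ p / √t := by
    rw [sqrt_eq_rpow, ← rpow_mul ht0.le, ← rpow_sub ht0]; ring_nf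
  rw [hbase, mul_rpow (by positivity) (sub_pos.2 ht1).le, hsq, ha_exp, ht_exp,
    mul_rpow ha.le hsqrt.le]
  field_simp

theorem integrableOn_Ioo_rpow_mul_sq_sub_sq_rpow (hk : 0 < k) (ha : 0 < a) {p : ℝ}
    (hp : -1 < p) : IntegrableOn (fun x => x ^ p * (a ^ 2 - x ^ 2) ^ (k - 1)) (Ioo 0 a) := by
  have hp' : 0 < (p + 1) / 2 := by linarith
  -- Non-integrable functions have Bochner integral `0`, so the positive value just computed
  -- forces integrability.
  refine .of_integral_ne_zero ?_
  rw [integral_Ioo_rpow_mul_sq_sub_sq_rpow hk ha hp]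
  have := Gamma_pos_of_pos hp'
  have := Gamma_pos_of_pos hk
  have := Gamma_pos_of_pos (add_pos hp' hk)
  have := rpow_pos_of_pos ha (p + 2 * k - 1)
  positivity

theorem integrableOn_Ioo_sq_sub_sq_rpow (hk : 0 < k) (ha : 0 < a) :
    IntegrableOn (fun x => (a ^ 2 - x ^ 2) ^ (k - 1)) (Ioo (-a) a) := by
  refine IntegrableOn.Ioo_neg_self_of_even (fun x => by rw [neg_sq]) ?_
  simpa using integrableOn_Ioo_rpow_mul_sq_sub_sq_rpow hk ha neg_one_lt_zero

theorem integral_Ioo_pow_odd_mul_sq_sub_sq_rpow (n : ℕ) :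
    ∫ x in Ioo (-a) a, x ^ (2 * n + 1) * (a ^ 2 - x ^ 2) ^ (k - 1) = 0 :=
  setIntegral_Ioo_neg_self_of_odd (fun x => by rw [Odd.neg_pow ⟨n, rfl⟩, neg_sq, neg_mul]) a

theorem integral_Ioo_pow_even_mul_sq_sub_sq_rpow (hk : 0 < k) (ha : 0 < a) (n : ℕ) :
    ∫ x in Ioo (-a) a, x ^ (2 * n) * (a ^ 2 - x ^ 2) ^ (k - 1) =
      a ^ ((2 * n : ℕ) + 2 * k - 1) * (Gamma (n + 1 / 2) * Gamma k / Gamma (n + k + 1 / 2)) := by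
  have hp : -1 < ((2 * n : ℕ) : ℝ) := neg_one_lt_zero.trans_le (Nat.cast_nonneg _)
  have half := integral_Ioo_rpow_mul_sq_sub_sq_rpow hk ha hp
  have hint := integrableOn_Ioo_rpow_mul_sq_sub_sq_rpow hk ha hp
  simp only [rpow_natCast] at half hint
  have heven : ∀ x : ℝ, (-x) ^ (2 * n) * (a ^ 2 - (-x) ^ 2) ^ (k - 1) =
      x ^ (2 * n) * (a ^ 2 - x ^ 2) ^ (k - 1) := fun x => by
    rw [Even.neg_pow ⟨n, two_mul n⟩, neg_sq]
  rw [setIntegral_Ioo_neg_self_of_even heven hint, smul_eq_mul, half,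
    show ((2 * n : ℕ) + 1) / 2 = (n : ℝ) + 1 / 2 by push_cast; ring, add_right_comm]
  ring

end Moments

theorem Gamma_nat_add_half_mul_factorial (n : ℕ) :
    Gamma (n + 1 / 2) * n ! * 4 ^ n = √π * (2 * n)! := by
  have h := Gamma_mul_Gamma_add_half (n + 1 / 2)
  rw [show (n : ℝ) + 1 / 2 + 1 / 2 = n + 1 by ring, Gamma_nat_eq_factorial,
    show 2 * ((n : ℝ) + 1 / 2) = (2 * n : ℕ) + 1 by push_cast; ring, Gamma_nat_eq_factorial,
    show (1 : ℝ) - ((2 * n : ℕ) + 1) = -((2 * n : ℕ) : ℝ) by ring, rpow_neg zero_le_two,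
    rpow_natCast, pow_mul] at h
  rw [h]
  norm_num
  field_simp

theorem Gamma_two_mul_div_mul_even_term {k a : ℝ} (hk : 0 < k) (ha : 0 < a) (b : ℝ) (n : ℕ) :
    Gamma (2 * k) / (Gamma k ^ 2 * (2 * a) ^ (2 * k - 1)) *
      (b ^ (2 * n) / (2 * n)! *
        (a ^ ((2 * n : ℕ) + 2 * k - 1) * (Gamma (n + 1 / 2) * Gamma k / Gamma (n + k + 1 / 2)))) =
    Gamma (k + 1 / 2) * ((a * b / 2) ^ (2 * n) / (n ! * Gamma (n + k + 1 / 2))) := by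
  have hdup := Gamma_mul_Gamma_add_half k
  have hhalf := Gamma_nat_add_half_mul_factorial n
  have h2 : (2 : ℝ) ^ (1 - 2 * k) * 2 ^ (2 * k - 1) = 1 := by
    rw [← rpow_add two_pos]; norm_num
  have ha_exp : a ^ ((2 * n : ℕ) + 2 * k - 1) = a ^ (2 * n) * a ^ (2 * k - 1) := by
    rw [add_sub_assoc, rpow_add ha, rpow_natCast]
  have hpow : (a * b / 2) ^ (2 * n) = a ^ (2 * n) * b ^ (2 * n) / 4 ^ n := by
    rw [div_pow, mul_pow, pow_mul (2 : ℝ)]; norm_num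
  have hΓk := Gamma_pos_of_pos hk
  have hΓ := Gamma_pos_of_pos (show 0 < (n : ℝ) + k + 1 / 2 by positivity)
  have hk_half : Gamma (k + 1 / 2) = Gamma (2 * k) * √π / (Gamma k * 2 ^ (2 * k - 1)) := by
    rw [eq_div_iff (by positivity)]
    linear_combination 2 ^ (2 * k - 1) * hdup + Gamma (2 * k) * √π * h2
  rw [mul_rpow zero_le_two ha.le, ha_exp, hpow, hk_half]
  generalize Gamma (n + 1 / 2) = G at hhalf ⊢
  field_simp
  linear_combination b ^ (2 * n) * hhalf

/-- the Dunkl–Bessel function of type `A₁`: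
for `k > 0`, `a > 0`, `b ∈ ℝ`,
`(Γ(2k) / (Γ(k)² (2a)^{2k−1})) ∫_{−a}^{a} e^{bν}(a²−ν²)^{k−1} dν
 = Γ(k+1/2) Σ_{n=0}^∞ (ab/2)^{2n} / (n! Γ(n+k+1/2))`. -/
theorem stmt2 (k a b : ℝ) (hk : 0 < k) (ha : 0 < a) :
    Real.Gamma (2 * k) / (Real.Gamma k ^ 2 * (2 * a) ^ (2 * k - 1)) *
      ∫ ν in Set.Ioo (-a) a, Real.exp (b * ν) * (a ^ 2 - ν ^ 2) ^ (k - 1) =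
    Real.Gamma (k + 1 / 2) *
      ∑' n : ℕ, (a * b / 2) ^ (2 * n) / ((n.factorial : ℝ) * Real.Gamma ((n : ℝ) + k + 1 / 2)) := by
  have hbound : ∀ᵐ ν ∂volume.restrict (Ioo (-a) a), |ν| ≤ a :=
    ae_restrict_of_forall_mem measurableSet_Ioo fun ν hν => abs_le.2 ⟨hν.1.le, hν.2.le⟩
  have hseries := hasSum_integral_exp_mul (integrableOn_Ioo_sq_sub_sq_rpow hk ha) hbound b
  have heven : HasSum (fun n : ℕ => b ^ (2 * n) / (2 * n)! *
      ∫ ν in Ioo (-a) a, ν ^ (2 * n) * (a ^ 2 - ν ^ 2) ^ (k - 1))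
      (∫ ν in Ioo (-a) a, exp (b * ν) * (a ^ 2 - ν ^ 2) ^ (k - 1)) := by
    refine ((mul_right_injective₀ two_ne_zero).hasSum_iff fun m hm => ?_).2 hseries
    obtain ⟨n, rfl⟩ : Odd m := Nat.not_even_iff_odd.1 fun ⟨n, hn⟩ => hm ⟨n, by simp [hn, two_mul]⟩
    rw [integral_Ioo_pow_odd_mul_sq_sub_sq_rpow, mul_zero]
  rw [← heven.tsum_eq, ← tsum_mul_left, ← tsum_mul_left]
  refine tsum_congr fun n => ?_
  rw [integral_Ioo_pow_even_mul_sq_sub_sq_rpow hk ha, Gamma_two_mul_div_mul_even_term hk ha]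
end

section
/- Let λ₁ ≥ λ₂ ≥ λ₃ be real numbers with λ₁ + λ₂ + λ₃ = 0, and let ν₁, ν₂, ν₃ be real numbers with ν₁ + ν₂ + ν₃ = 0. Then max( |ν₁ − ν₂|/2 , |(ν₁ + ν₂)/2 − λ₂| ) ≤ min( (ν₁ + ν₂)/2 − λ₃ , λ₁ − (ν₁ + ν₂)/2 ) holds if and only if λ₃ ≤ min(ν₁, ν₂, ν₃) and max(ν₁, ν₂, ν₃) ≤ λ₁. -/
/-- for `λ₁ ≥ λ₂ ≥ λ₃` with `λ₁+λ₂+λ₃ = 0` and `ν₁+ν₂+ν₃ = 0`: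
`max(|ν₁−ν₂|/2, |(ν₁+ν₂)/2 − λ₂|) ≤ min((ν₁+ν₂)/2 − λ₃, λ₁ − (ν₁+ν₂)/2)`
iff `λ₃ ≤ min(ν₁,ν₂,ν₃)` and `max(ν₁,ν₂,ν₃) ≤ λ₁`. -/
theorem stmt4 (l1 l2 l3 n1 n2 n3 : ℝ) (h12 : l2 ≤ l1) (h23 : l3 ≤ l2)
    (hl : l1 + l2 + l3 = 0) (hn : n1 + n2 + n3 = 0) :
    max (|n1 - n2| / 2) (|(n1 + n2) / 2 - l2|) ≤
      min ((n1 + n2) / 2 - l3) (l1 - (n1 + n2) / 2) ↔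
    (l3 ≤ min n1 (min n2 n3) ∧ max n1 (max n2 n3) ≤ l1) := by
  simp only [max_le_iff, le_min_iff, abs_le, div_le_iff₀ (by norm_num : (0:ℝ) < 2),
    abs_sub_le_iff]
  constructor
  · rintro ⟨⟨⟨a1, a2⟩, ⟨b1, b2⟩⟩, ⟨⟨c1, c2⟩, ⟨d1, d2⟩⟩⟩
    refine ⟨⟨by linarith, by linarith, by linarith⟩, by linarith, by linarith, by linarith⟩
  · rintro ⟨⟨a1, a2, a3⟩, ⟨b1, b2, b3⟩⟩
    refine ⟨⟨⟨by linarith, by linarith⟩, by linarith, by linarith⟩,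
      ⟨by linarith, by linarith⟩, by linarith, by linarith⟩
end

section
/- Let k > 0 and let λ = (λ₁, λ₂, λ₃) ∈ ℝ³ with λ₁ ≥ λ₂ ≥ λ₃ and λ₁ + λ₂ + λ₃ = 0. For ν = (ν₁, ν₂, ν₃) ∈ ℝ³ with ν₁ + ν₂ + ν₃ = 0, set x = (ν₁ + ν₂)/2, y = (ν₁ − ν₂)/2 and define δ_{k,2}(λ, ν) = C_k(λ) · ∫_{z ∈ (max(|y|, |x − λ₂|), min(x − λ₃, λ₁ − x))} ((z² − y²)/z²)^{k−1} · ( ((λ₁ − x)² − z²) ((x − λ₃)² − z²) (z² − (λ₂ − x)²) )^{k−1} dz, where C_k(λ) = 2·Γ(2k)Γ(3k) / (2^{2k−3} Γ(k)⁵ V₃(λ)^{2k−1}) and the integral over an empty interval is 0. Then the function ν ↦ δ_{k,2}(λ, ν) vanishes at every ν (with ν₁ + ν₂ + ν₃ = 0) that does not belong to co(λ), the convex hull of the S₃-orbit of λ. -/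
/-! If the interval of integration is nonempty, then `x ± y` and `-2x`, i.e. the coordinates of `ν`,
all lie in `[λ₃, λ₁]`. In dimension three such a vector with the same coordinate sum as `λ` lies
in the permutohedron `co(λ)`: it is reached from a vertex by two moves along segments joining a
point to its image under a transposition. So outside `co(λ)` the integral is over `∅`. -/

open Set Function

section PermInvariant

variable {ι : Type*}

lemma comp_perm_mem_convexHull {S : Set (ι → ℝ)} (hS : ∀ w ∈ S, ∀ σ : Equiv.Perm ι, w ∘ σ ∈ S)
    {v : ι → ℝ} (hv : v ∈ convexHull ℝ S) (σ : Equiv.Perm ι) : v ∘ σ ∈ convexHull ℝ S := by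
  have hv' : LinearMap.funLeft ℝ ℝ σ v ∈ LinearMap.funLeft ℝ ℝ σ '' convexHull ℝ S :=
    mem_image_of_mem _ hv
  rw [LinearMap.image_convexHull] at hv'
  exact convexHull_mono (by rintro _ ⟨w, hw, rfl⟩; exact hS w hw σ) hv'

variable [DecidableEq ι]

lemma Convex.update_update_mem {C : Set (ι → ℝ)} (hC : Convex ℝ C) {v : ι → ℝ} {i j : ι}
    (hij : i ≠ j) (hv : v ∈ C) (hv' : v ∘ Equiv.swap i j ∈ C) {t : ℝ}
    (ht : t ∈ uIcc (v i) (v j)) : update (update v i t) j (v i + v j - t) ∈ C := by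
  rw [← segment_eq_uIcc, segment_eq_image] at ht
  obtain ⟨θ, hθ, rfl⟩ := ht
  convert hC hv hv' (sub_nonneg.2 hθ.2) hθ.1 (sub_add_cancel 1 θ) using 1
  funext k
  rcases eq_or_ne k j with rfl | hkj
  · simp only [update_self, Pi.add_apply, Pi.smul_apply, comp_apply, Equiv.swap_apply_right,
      smul_eq_mul]
    ring
  rcases eq_or_ne k i with rfl | hki
  · simp [hkj]
  · simp only [update_of_ne hkj, update_of_ne hki, Pi.add_apply, Pi.smul_apply, comp_apply,
      Equiv.swap_apply_of_ne_of_ne hki hkj, smul_eq_mul]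
    ring

end PermInvariant

theorem mem_convexHull_perm_orbit_of_mem_Icc {l1 l2 l3 w1 w2 w3 : ℝ} (hw1 : w1 ∈ Icc l3 l1)
    (hw2 : w2 ∈ Icc l3 l1) (hw3 : w3 ∈ Icc l3 l1) (hsum : w1 + w2 + w3 = l1 + l2 + l3) :
    ![w1, w2, w3] ∈
      convexHull ℝ {w : Fin 3 → ℝ | ∃ σ : Equiv.Perm (Fin 3), w = ![l1, l2, l3] ∘ σ} := by
  set S := {w : Fin 3 → ℝ | ∃ σ : Equiv.Perm (Fin 3), w = ![l1, l2, l3] ∘ σ}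
  have hS : ∀ w ∈ S, ∀ σ : Equiv.Perm (Fin 3), w ∘ σ ∈ S := by
    rintro _ ⟨τ, rfl⟩ σ
    exact ⟨σ.trans τ, rfl⟩
  have hC := convex_convexHull ℝ S
  have hperm := fun v (hv : v ∈ convexHull ℝ S) ↦ comp_perm_mem_convexHull hS hv
  have hvert : ∀ σ : Equiv.Perm (Fin 3), ![l1, l2, l3] ∘ σ ∈ convexHull ℝ S :=
    fun σ ↦ subset_convexHull ℝ S ⟨σ, rfl⟩
  obtain ⟨hw1l, hw1u⟩ := hw1
  obtain ⟨hw2l, hw2u⟩ := hw2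
  obtain ⟨hw3l, hw3u⟩ := hw3
  rcases le_total l2 w1 with hw1m | hw1m
  · have hfirst : ![w1, l1 + l2 - w1, l3] ∈ convexHull ℝ S := by
      convert hC.update_update_mem (i := 0) (j := 1) (by decide) (hvert 1)
        (hperm _ (hvert 1) _) (t := w1) (Icc_subset_uIcc' ⟨hw1m, hw1u⟩ : w1 ∈ uIcc l1 l2) using 1
      funext k; fin_cases k <;> simp
    convert hC.update_update_mem (i := 1) (j := 2) (by decide) hfirst (hperm _ hfirst _)
      (t := w2) (Icc_subset_uIcc' ⟨hw2l, by linarith⟩ : w2 ∈ uIcc (l1 + l2 - w1) l3) using 1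
    funext k
    fin_cases k <;> simp
    linarith
  · have hvert' : ![l2, l1, l3] ∈ convexHull ℝ S := by
      convert hvert (Equiv.swap 0 1) using 1
      funext k; fin_cases k <;> rfl
    have hfirst : ![w1, l1, l2 + l3 - w1] ∈ convexHull ℝ S := by
      convert hC.update_update_mem (i := 0) (j := 2) (by decide) hvert' (hperm _ hvert' _)
        (t := w1) (Icc_subset_uIcc' ⟨hw1l, hw1m⟩ : w1 ∈ uIcc l2 l3) using 1
      funext k; fin_cases k <;> simp
    convert hC.update_update_mem (i := 1) (j := 2) (by decide) hfirst (hperm _ hfirst _)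
      (t := w2) (Icc_subset_uIcc' ⟨by linarith, hw2u⟩ : w2 ∈ uIcc l1 (l2 + l3 - w1)) using 1
    funext k
    fin_cases k <;> simp
    linarith

theorem stmt6_general (k l1 l2 l3 : ℝ) (hl : l1 + l2 + l3 = 0) (n1 n2 n3 : ℝ) (hn : n1 + n2 + n3 = 0)
    (hnot : ![n1, n2, n3] ∉
      convexHull ℝ {w : Fin 3 → ℝ | ∃ σ : Equiv.Perm (Fin 3), w = ![l1, l2, l3] ∘ σ}) :
    (2 * Real.Gamma (2 * k) * Real.Gamma (3 * k) /
        ((2 : ℝ) ^ (2 * k - 3) * Real.Gamma k ^ 5 *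
          ((l1 - l2) * (l1 - l3) * (l2 - l3)) ^ (2 * k - 1))) *
      ∫ z in Set.Ioo (max |(n1 - n2) / 2| |(n1 + n2) / 2 - l2|)
          (min ((n1 + n2) / 2 - l3) (l1 - (n1 + n2) / 2)),
        ((z ^ 2 - ((n1 - n2) / 2) ^ 2) / z ^ 2) ^ (k - 1) *
          (((l1 - (n1 + n2) / 2) ^ 2 - z ^ 2) * (((n1 + n2) / 2 - l3) ^ 2 - z ^ 2) *
            (z ^ 2 - (l2 - (n1 + n2) / 2) ^ 2)) ^ (k - 1) = 0 := by
  suffices hempty : Ioo (max |(n1 - n2) / 2| |(n1 + n2) / 2 - l2|)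
      (min ((n1 + n2) / 2 - l3) (l1 - (n1 + n2) / 2)) = ∅ by
    rw [hempty, MeasureTheory.Measure.restrict_empty, MeasureTheory.integral_zero_measure,
      mul_zero]
  refine Ioo_eq_empty fun hlt ↦ hnot ?_
  have hle := hlt.le
  simp only [max_le_iff, le_min_iff, abs_le] at hle
  obtain ⟨⟨⟨hy1, hy2⟩, hy3, hy4⟩, ⟨hx1, hx2⟩, hx3, hx4⟩ := hle
  exact mem_convexHull_perm_orbit_of_mem_Icc ⟨by linarith, by linarith⟩
    ⟨by linarith, by linarith⟩ ⟨by linarith, by linarith⟩ (by linarith)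

/-- for `k > 0` and `λ₁ ≥ λ₂ ≥ λ₃` with `λ₁+λ₂+λ₃ = 0`, the density
`δ_{k,2}(λ, ·)` vanishes at every `ν` (with `ν₁+ν₂+ν₃ = 0`) outside the convex hull
of the `S₃`-orbit of `λ`. Here, with `x = (ν₁+ν₂)/2`, `y = (ν₁−ν₂)/2`,
`δ_{k,2}(λ,ν) = (2 Γ(2k) Γ(3k) / (2^{2k−3} Γ(k)⁵ V₃(λ)^{2k−1})) ·
∫_{max(|y|,|x−λ₂|)}^{min(x−λ₃,λ₁−x)} ((z²−y²)/z²)^{k−1}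
  (((λ₁−x)²−z²)((x−λ₃)²−z²)(z²−(λ₂−x)²))^{k−1} dz`. -/
theorem stmt6 (k l1 l2 l3 : ℝ) (hk : 0 < k) (h12 : l2 ≤ l1) (h23 : l3 ≤ l2)
    (hl : l1 + l2 + l3 = 0) (n1 n2 n3 : ℝ) (hn : n1 + n2 + n3 = 0)
    (hnot : ![n1, n2, n3] ∉
      convexHull ℝ {w : Fin 3 → ℝ | ∃ σ : Equiv.Perm (Fin 3), w = ![l1, l2, l3] ∘ σ}) :
    (2 * Real.Gamma (2 * k) * Real.Gamma (3 * k) /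
        ((2 : ℝ) ^ (2 * k - 3) * Real.Gamma k ^ 5 *
          ((l1 - l2) * (l1 - l3) * (l2 - l3)) ^ (2 * k - 1))) *
      ∫ z in Set.Ioo (max |(n1 - n2) / 2| |(n1 + n2) / 2 - l2|)
          (min ((n1 + n2) / 2 - l3) (l1 - (n1 + n2) / 2)),
        ((z ^ 2 - ((n1 - n2) / 2) ^ 2) / z ^ 2) ^ (k - 1) *
          (((l1 - (n1 + n2) / 2) ^ 2 - z ^ 2) * (((n1 + n2) / 2 - l3) ^ 2 - z ^ 2) *
            (z ^ 2 - (l2 - (n1 + n2) / 2) ^ 2)) ^ (k - 1) = 0 :=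
  stmt6_general k l1 l2 l3 hl n1 n2 n3 hn hnot
end

section
/- Let N ≥ 2 be a natural number, k > 0, and let μ ∈ ℝ^N satisfy μ₁ > μ₂ > … > μ_N. Define c_N(ν) = ∏_{1 ≤ i < j ≤ N} [ Γ(νᵢ − νⱼ) Γ(k(j−i+1)) ] / [ Γ(νᵢ − νⱼ + k) Γ(k(j−i)) ] for ν ∈ ℝ^N with νᵢ > νⱼ for i < j, and similarly c_{N−1} for vectors in ℝ^{N−1}. Let μ̄ = (μ₁ − μ_N, …, μ_{N−1} − μ_N) ∈ ℝ^{N−1}. Then lim_{n→∞} n^{k(N−1)} · c_N(nμ) / c_{N−1}(nμ̄) = ( Γ(Nk) / Γ(k) ) · ∏_{j=1}^{N−1} (μⱼ − μ_N)^{−k}, where the limit is taken as the natural number n tends to infinity. -/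
/-!
Only the pairs `(i, N)` distinguish `c_N(nμ)` from `c_{N-1}(nμ̄)`: since `c` depends only on
the differences `νᵢ - νⱼ`, the factors of the pairs `i < j < N` cancel. For the pairs `(i, N)` the
`k`-dependent constants telescope to `Γ(Nk)/Γ(k)`, and each remaining factor
`Γ(n dᵢ)/Γ(n dᵢ + k)`, `dᵢ = μᵢ - μ_N`, is asymptotic to `(n dᵢ)^(-k)` by Wendel's limit
`Γ(x + s) ~ Γ(x) x^s`, which follows from the log-convexity of `Γ`.
-/

/-- `c_M(ν) = ∏_{i<j} Γ(νᵢ−νⱼ)Γ(k(j−i+1)) / (Γ(νᵢ−νⱼ+k)Γ(k(j−i)))`. -/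
noncomputable def cHarish (k : ℝ) {M : ℕ} (ν : Fin M → ℝ) : ℝ :=
  ∏ i : Fin M, ∏ j : Fin M,
    if i < j then
      Real.Gamma (ν i - ν j) * Real.Gamma (k * (((j : ℕ) : ℝ) - ((i : ℕ) : ℝ) + 1)) /
        (Real.Gamma (ν i - ν j + k) * Real.Gamma (k * (((j : ℕ) : ℝ) - ((i : ℕ) : ℝ))))
    else 1

open Real Filter Topology

namespace Real

theorem Gamma_mul_add_mul_le_rpow_Gamma_mul_rpow_Gamma_of_nonneg {s t a b : ℝ} (hs : 0 < s)
    (ht : 0 < t) (ha : 0 ≤ a) (hb : 0 ≤ b) (hab : a + b = 1) :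
    Gamma (a * s + b * t) ≤ Gamma s ^ a * Gamma t ^ b := by
  rcases ha.eq_or_lt with rfl | ha
  · obtain rfl : b = 1 := by linarith
    simp
  rcases hb.eq_or_lt with rfl | hb
  · obtain rfl : a = 1 := by linarith
    simp
  exact Gamma_mul_add_mul_le_rpow_Gamma_mul_rpow_Gamma hs ht ha hb hab

theorem Gamma_add_le_Gamma_mul_rpow {x s : ℝ} (hx : 0 < x) (hs0 : 0 ≤ s) (hs1 : s ≤ 1) :
    Gamma (x + s) ≤ Gamma x * x ^ s := by
  have hΓ := Gamma_pos_of_pos hx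
  calc Gamma (x + s) = Gamma ((1 - s) * x + s * (x + 1)) := by ring_nf
    _ ≤ Gamma x ^ (1 - s) * Gamma (x + 1) ^ s :=
      Gamma_mul_add_mul_le_rpow_Gamma_mul_rpow_Gamma_of_nonneg hx (by linarith)
        (sub_nonneg.2 hs1) hs0 (by ring)
    _ = x ^ s * Gamma x ^ (1 - s + s) := by
      rw [Gamma_add_one hx.ne', mul_rpow hx.le hΓ.le, rpow_add hΓ]; ring
    _ = Gamma x * x ^ s := by rw [sub_add_cancel, rpow_one, mul_comm]

theorem tendsto_add_const_div_self_atTop (c : ℝ) :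
    Tendsto (fun x : ℝ => (x + c) / x) atTop (𝓝 1) := by
  have h : Tendsto (fun x : ℝ => 1 + c / x) atTop (𝓝 (1 + 0)) :=
    tendsto_const_nhds.add (tendsto_const_nhds.div_atTop tendsto_id)
  rw [add_zero] at h
  refine h.congr' ?_
  filter_upwards [eventually_ne_atTop 0] with x hx
  rw [add_div, div_self hx]

/-- For `s ∈ [0, 1]` log-convexity squeezes the ratio between `(x / (x + s)) ^ (1 - s)` and `1`. -/
theorem tendsto_Gamma_add_div_Gamma_mul_rpow_of_le_one {s : ℝ} (hs0 : 0 ≤ s) (hs1 : s ≤ 1) :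
    Tendsto (fun x : ℝ => Gamma (x + s) / (Gamma x * x ^ s)) atTop (𝓝 1) := by
  have hlow : Tendsto (fun x : ℝ => ((x + s) / x)⁻¹ ^ (1 - s)) atTop (𝓝 1) := by
    have h := (tendsto_add_const_div_self_atTop s).inv₀ one_ne_zero
    rw [inv_one] at h
    simpa using h.rpow_const (p := 1 - s) (Or.inl one_ne_zero)
  refine tendsto_of_tendsto_of_tendsto_of_le_of_le' hlow tendsto_const_nhds ?_ ?_
  all_goals
    filter_upwards [eventually_gt_atTop 0] with x hx
    have hΓx := Gamma_pos_of_pos hx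
  · have hxs : 0 < x + s := by linarith
    -- the upper bound at `x + s` with exponent `1 - s` reads `x Γ(x) ≤ Γ(x + s) (x + s) ^ (1 - s)`
    have h := Gamma_add_le_Gamma_mul_rpow hxs (sub_nonneg.2 hs1) (by linarith)
    rw [add_add_sub_cancel, Gamma_add_one hx.ne', mul_comm] at h
    rw [inv_div, div_rpow hx.le hxs.le, div_le_div_iff₀ (rpow_pos_of_pos hxs _) (by positivity)]
    calc x ^ (1 - s) * (Gamma x * x ^ s) = Gamma x * x := by
          rw [mul_left_comm, ← rpow_add hx, sub_add_cancel, rpow_one]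
      _ ≤ _ := h
  · rw [div_le_one (by positivity)]
    exact Gamma_add_le_Gamma_mul_rpow hx hs0 hs1

theorem tendsto_Gamma_add_one_div_Gamma_mul_rpow {s : ℝ}
    (h : Tendsto (fun x : ℝ => Gamma (x + s) / (Gamma x * x ^ s)) atTop (𝓝 1)) :
    Tendsto (fun x : ℝ => Gamma (x + (s + 1)) / (Gamma x * x ^ (s + 1))) atTop (𝓝 1) := by
  have h' := h.mul (tendsto_add_const_div_self_atTop s)
  rw [mul_one] at h'
  refine h'.congr' ?_
  filter_upwards [eventually_gt_atTop 0, eventually_ne_atTop (-s)] with x hx hxs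
  have hxs' : x + s ≠ 0 := fun h => hxs (eq_neg_of_add_eq_zero_left h)
  rw [← add_assoc, Gamma_add_one hxs', rpow_add_one hx.ne']
  have := (Gamma_pos_of_pos hx).ne'
  have := (rpow_pos_of_pos hx s).ne'
  field_simp

/-- **Wendel's limit** `Γ(x + s) ~ Γ(x) x ^ s` as `x → ∞`. -/
theorem tendsto_Gamma_add_div_Gamma_mul_rpow {s : ℝ} (hs : 0 ≤ s) :
    Tendsto (fun x : ℝ => Gamma (x + s) / (Gamma x * x ^ s)) atTop (𝓝 1) := by
  have key : ∀ n : ℕ, ∀ t : ℝ, 0 ≤ t → t ≤ 1 →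
      Tendsto (fun x : ℝ => Gamma (x + (t + n)) / (Gamma x * x ^ (t + n))) atTop (𝓝 1) := by
    intro n t ht0 ht1
    induction n with
    | zero => simpa using tendsto_Gamma_add_div_Gamma_mul_rpow_of_le_one ht0 ht1
    | succ n ih =>
      push_cast
      rw [← add_assoc]
      exact tendsto_Gamma_add_one_div_Gamma_mul_rpow ih
  have h := key ⌊s⌋₊ (s - ⌊s⌋₊) (sub_nonneg.2 (Nat.floor_le hs))
    (by linarith [Nat.lt_floor_add_one s])
  rwa [sub_add_cancel] at h

theorem tendsto_rpow_mul_Gamma_mul_div_Gamma_mul_add {d s : ℝ} (hd : 0 < d) (hs : 0 ≤ s) :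
    Tendsto (fun x : ℝ => x ^ s * (Gamma (x * d) / Gamma (x * d + s))) atTop
      (𝓝 (d ^ (-s))) := by
  have h := ((tendsto_Gamma_add_div_Gamma_mul_rpow hs).comp
    (tendsto_id.atTop_mul_const hd)).inv₀ one_ne_zero
  rw [inv_one] at h
  have h' := h.const_mul (d ^ (-s))
  rw [mul_one] at h'
  refine h'.congr' ?_
  filter_upwards [eventually_gt_atTop 0] with x hx
  have hxd : 0 < x * d := mul_pos hx hd
  have := (Gamma_pos_of_pos hxd).ne'
  have := (Gamma_pos_of_pos (show 0 < x * d + s by linarith)).ne'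
  have := (rpow_pos_of_pos hd s).ne'
  have := (rpow_pos_of_pos hx s).ne'
  simp only [Function.comp_apply, id]
  rw [mul_rpow hx.le hd.le, rpow_neg hd.le]
  field_simp

end Real

theorem prod_Gamma_mul_sub_add_one_div_Gamma_mul_sub {k : ℝ} (hk : 0 < k) (M : ℕ) :
    ∏ i : Fin M, Gamma (k * ((M : ℝ) - i + 1)) / Gamma (k * ((M : ℝ) - i)) =
      Gamma (k * (M + 1)) / Gamma k := by
  induction M with
  | zero => simp [div_self (Gamma_pos_of_pos hk).ne']
  | succ M ih =>
    rw [Fin.prod_univ_succ]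
    simp only [Fin.val_zero, Fin.val_succ, Nat.cast_add, Nat.cast_one, CharP.cast_eq_zero,
      sub_zero, add_sub_add_right_eq_sub, ih]
    have := (Gamma_pos_of_pos (show 0 < k * (M + 1) by positivity)).ne'
    field_simp

theorem cHarish_succ (k : ℝ) {M : ℕ} (ν : Fin (M + 1) → ℝ) :
    cHarish k ν = cHarish k (fun i : Fin M => ν i.castSucc) *
      ∏ i : Fin M,
        Gamma (ν i.castSucc - ν (Fin.last M)) * Gamma (k * ((M : ℝ) - i + 1)) /
          (Gamma (ν i.castSucc - ν (Fin.last M) + k) * Gamma (k * ((M : ℝ) - i))) := by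
  have hlast : ∀ j : Fin (M + 1), ¬Fin.last M < j := fun j => (Fin.le_last j).not_gt
  simp only [cHarish, Fin.prod_univ_castSucc (n := M), hlast, if_false, Finset.prod_const_one,
    mul_one, Finset.prod_mul_distrib, Fin.castSucc_lt_castSucc_iff, Fin.castSucc_lt_last,
    if_true, Fin.val_castSucc, Fin.val_last]

theorem cHarish_sub_const (k c : ℝ) {M : ℕ} (ν : Fin M → ℝ) :
    cHarish k (fun i => ν i - c) = cHarish k ν := by
  simp only [cHarish, sub_sub_sub_cancel_right]

theorem cHarish_pos {k : ℝ} (hk : 0 < k) {M : ℕ} {ν : Fin M → ℝ} (hν : StrictAnti ν) :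
    0 < cHarish k ν := by
  refine Finset.prod_pos fun i _ => Finset.prod_pos fun j _ => ?_
  split_ifs with hij
  · have hν : 0 < ν i - ν j := sub_pos.2 (hν hij)
    have hji : (0 : ℝ) < (j : ℕ) - (i : ℕ) := sub_pos.2 (by exact_mod_cast hij)
    have := Gamma_pos_of_pos hν
    have := Gamma_pos_of_pos (show 0 < ν i - ν j + k by linarith)
    have := Gamma_pos_of_pos (mul_pos hk hji)
    have := Gamma_pos_of_pos (mul_pos hk (show (0 : ℝ) < (j : ℕ) - (i : ℕ) + 1 by linarith))
    positivity
  · exact one_pos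

theorem cHarish_div_cHarish_sub_last {k : ℝ} (hk : 0 < k) {M : ℕ} {ν : Fin (M + 1) → ℝ}
    (hν : StrictAnti ν) :
    cHarish k ν / cHarish k (fun i : Fin M => ν i.castSucc - ν (Fin.last M)) =
      (∏ i : Fin M, Gamma (ν i.castSucc - ν (Fin.last M)) /
        Gamma (ν i.castSucc - ν (Fin.last M) + k)) * (Gamma (k * (M + 1)) / Gamma k) := by
  have hpos : 0 < cHarish k (fun i : Fin M => ν i.castSucc) :=
    cHarish_pos hk (hν.comp_strictMono Fin.strictMono_castSucc)
  rw [cHarish_sub_const, cHarish_succ, mul_div_cancel_left₀ _ hpos.ne',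
    ← prod_Gamma_mul_sub_add_one_div_Gamma_mul_sub hk, ← Finset.prod_mul_distrib]
  simp only [mul_div_mul_comm]

theorem rpow_mul_cHarish_mul_div_cHarish_mul_sub_last {k : ℝ} (hk : 0 < k) {M : ℕ}
    {μ : Fin (M + 1) → ℝ} (hμ : StrictAnti μ) {x : ℝ} (hx : 0 < x) :
    x ^ (k * M) * cHarish k (fun i => x * μ i) /
        cHarish k (fun i : Fin M => x * (μ i.castSucc - μ (Fin.last M))) =
      (∏ i : Fin M, x ^ k * (Gamma (x * (μ i.castSucc - μ (Fin.last M))) /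
        Gamma (x * (μ i.castSucc - μ (Fin.last M)) + k))) * (Gamma (k * (M + 1)) / Gamma k) := by
  simp only [mul_sub]
  rw [mul_div_assoc, cHarish_div_cHarish_sub_last hk (hμ.const_mul hx), Finset.prod_mul_distrib,
    Finset.prod_const, Finset.card_univ, Fintype.card_fin, ← rpow_mul_natCast hx.le, mul_assoc]

/-- for `N ≥ 2`, `k > 0` and strictly decreasing `μ ∈ ℝ^N`, with
`μ̄ = (μ₁−μ_N, …, μ_{N−1}−μ_N) ∈ ℝ^{N−1}`,
`lim_{n→∞} n^{k(N−1)} c_N(nμ) / c_{N−1}(nμ̄)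
 = (Γ(Nk)/Γ(k)) ∏_{j=1}^{N−1} (μⱼ−μ_N)^{−k}`. -/
theorem stmt11 (N : ℕ) (hN : 2 ≤ N) (k : ℝ) (hk : 0 < k) (μ : Fin N → ℝ)
    (hμ : ∀ i j : Fin N, i < j → μ j < μ i) :
    Filter.Tendsto (fun n : ℕ =>
      (n : ℝ) ^ (k * ((N : ℝ) - 1)) *
        cHarish k (fun i : Fin N => (n : ℝ) * μ i) /
        cHarish k (fun i : Fin (N - 1) =>
          (n : ℝ) * (μ (Fin.castLE (by omega) i) - μ ⟨N - 1, by omega⟩)))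
      Filter.atTop
      (nhds (Real.Gamma ((N : ℝ) * k) / Real.Gamma k *
        ∏ j : Fin (N - 1),
          (μ (Fin.castLE (by omega) j) - μ ⟨N - 1, by omega⟩) ^ (-k))) := by
  obtain ⟨M, rfl⟩ : ∃ M, N = M + 1 := ⟨N - 1, by omega⟩
  have hd : ∀ i : Fin M, 0 < μ i.castSucc - μ (Fin.last M) :=
    fun i => sub_pos.2 (hμ _ _ (Fin.castSucc_lt_last i))
  have hlim := (tendsto_finsetProd Finset.univ fun i _ =>
    (tendsto_rpow_mul_Gamma_mul_div_Gamma_mul_add (hd i) hk.le).comp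
      tendsto_natCast_atTop_atTop).mul_const (Gamma (k * (M + 1)) / Gamma k)
  have hexp : ((M + 1 : ℕ) : ℝ) - 1 = M := by push_cast; ring
  have hGamma : ((M + 1 : ℕ) : ℝ) * k = k * (M + 1) := by push_cast; ring
  rw [hexp, hGamma, mul_comm (Gamma _ / _)]
  refine hlim.congr' ?_
  filter_upwards [eventually_gt_atTop 0] with n hn
  exact (rpow_mul_cHarish_mul_div_cHarish_mul_sub_last hk hμ (Nat.cast_pos.2 hn)).symm
end

section
/- Let λ₁ ≥ λ₂ ≥ λ₃ ≥ λ₄ be real numbers with λ₁ + λ₂ + λ₃ + λ₄ = 0, let x₁, x₂, x₃ be real numbers with x₁ + x₂ + x₃ = 0, let Z₁, Z₂, Z₃, Z₄ be real numbers with Z₁ + Z₂ + Z₃ + Z₄ = 0, and set s = (Z₁ + Z₂ + Z₃)/3. Assume: λ₂ ≤ x₁ + s ≤ λ₁; λ₃ ≤ x₂ + s ≤ λ₂; λ₄ ≤ x₃ + s ≤ λ₃; and x₃ ≤ Zᵢ − s ≤ x₁ for each i ∈ {1, 2, 3}. Then: Zᵢ ≤ λ₁ for every i ∈ {1, 2,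 3, 4}; Zᵢ + Zⱼ ≤ λ₁ + λ₂ for all i < j in {1, 2, 3, 4}; and Zᵢ + Zⱼ + Z_l ≤ λ₁ + λ₂ + λ₃ for all i < j < l in {1, 2, 3, 4}. -/
/-!
Write `μᵢ = xᵢ + s`. Then `μ` interlaces `λ`, and `Z₁, Z₂, Z₃` lie in `[μ₃, μ₁]` with total
`3s = μ₁ + μ₂ + μ₃`, so `(Z₁, Z₂, Z₃)` is majorised by `μ`, while `Z₄ = -3s`. Every partial sum
of `Z` is therefore bounded by one of `μ₁`, `μ₁ + μ₂`, `μ₁ + μ₂ + μ₃` or, through `Z₄`, by one of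
`-(μ₁ + μ₂ + μ₃)`, `-(μ₂ + μ₃)`, `-μ₃`; interlacing and `Σ λ = 0` bound each of these by the
corresponding partial sum of `λ`.
-/

section Majorization

variable {α : Type*} [AddCommGroup α] [LinearOrder α] [IsOrderedAddMonoid α] {a b c p q r : α}

theorem add_le_add_of_add_add_eq_of_le (hr : c ≤ r) (h : p + q + r = a + b + c) :
    p + q ≤ a + b := by
  refine le_of_add_le_add_right (a := c) ?_
  calc p + q + c ≤ p + q + r := add_le_add le_rfl hr
    _ = a + b + c := h

theorem add_le_add_of_add_add_eq_of_ge (hp : p ≤ a) (h : p + q + r = a + b + c) :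
    b + c ≤ q + r := by
  refine le_of_add_le_add_left (a := a) ?_
  calc a + (b + c) = p + (q + r) := by rw [← add_assoc, ← add_assoc, h]
    _ ≤ a + (q + r) := add_le_add hp le_rfl

theorem add_mem_Icc_of_mem_Icc_of_add_add_eq (hp : p ∈ Set.Icc c a) (hq : q ∈ Set.Icc c a)
    (hr : r ∈ Set.Icc c a) (h : p + q + r = a + b + c) :
    p + q ∈ Set.Icc (b + c) (a + b) ∧ p + r ∈ Set.Icc (b + c) (a + b) ∧
      q + r ∈ Set.Icc (b + c) (a + b) := by
  have perm {x y z : α} (hxyz : x + y + z = p + q + r) : x + y + z = a + b + c := hxyz.trans h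
  exact ⟨⟨add_le_add_of_add_add_eq_of_ge hr.2 (perm (by abel)),
      add_le_add_of_add_add_eq_of_le hr.1 h⟩,
    ⟨add_le_add_of_add_add_eq_of_ge hq.2 (perm (by abel)),
      add_le_add_of_add_add_eq_of_le hq.1 (perm (by abel))⟩,
    ⟨add_le_add_of_add_add_eq_of_ge hp.2 h,
      add_le_add_of_add_add_eq_of_le hp.1 (perm (by abel))⟩⟩

end Majorization

theorem stmt13_general (l1 l2 l3 l4 x1 x2 x3 Z1 Z2 Z3 Z4 s : ℝ)
    (hlsum : l1 + l2 + l3 + l4 = 0)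
    (hxsum : x1 + x2 + x3 = 0)
    (hZsum : Z1 + Z2 + Z3 + Z4 = 0)
    (hs : s = (Z1 + Z2 + Z3) / 3)
    (h1 : l2 ≤ x1 + s ∧ x1 + s ≤ l1)
    (h2 : l3 ≤ x2 + s ∧ x2 + s ≤ l2)
    (h3 : l4 ≤ x3 + s ∧ x3 + s ≤ l3)
    (h4 : x3 ≤ Z1 - s ∧ Z1 - s ≤ x1)
    (h5 : x3 ≤ Z2 - s ∧ Z2 - s ≤ x1)
    (h6 : x3 ≤ Z3 - s ∧ Z3 - s ≤ x1) :
    (Z1 ≤ l1 ∧ Z2 ≤ l1 ∧ Z3 ≤ l1 ∧ Z4 ≤ l1) ∧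
    (Z1 + Z2 ≤ l1 + l2 ∧ Z1 + Z3 ≤ l1 + l2 ∧ Z1 + Z4 ≤ l1 + l2 ∧
      Z2 + Z3 ≤ l1 + l2 ∧ Z2 + Z4 ≤ l1 + l2 ∧ Z3 + Z4 ≤ l1 + l2) ∧
    (Z1 + Z2 + Z3 ≤ l1 + l2 + l3 ∧ Z1 + Z2 + Z4 ≤ l1 + l2 + l3 ∧
      Z1 + Z3 + Z4 ≤ l1 + l2 + l3 ∧ Z2 + Z3 + Z4 ≤ l1 + l2 + l3) := by
  have shift {Z : ℝ} (h : x3 ≤ Z - s ∧ Z - s ≤ x1) : Z ∈ Set.Icc (x3 + s) (x1 + s) :=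
    ⟨le_sub_iff_add_le.mp h.1, sub_le_iff_le_add.mp h.2⟩
  have hZ1 := shift h4
  have hZ2 := shift h5
  have hZ3 := shift h6
  have hsum : Z1 + Z2 + Z3 = (x1 + s) + (x2 + s) + (x3 + s) := by linarith
  obtain ⟨hZ12, hZ13, hZ23⟩ := add_mem_Icc_of_mem_Icc_of_add_add_eq hZ1 hZ2 hZ3 hsum
  obtain ⟨h1a, h1b⟩ := h1
  obtain ⟨h2a, h2b⟩ := h2
  obtain ⟨h3a, h3b⟩ := h3
  refine ⟨⟨?_, ?_, ?_, ?_⟩, ⟨?_, ?_, ?_, ?_, ?_, ?_⟩, ⟨?_, ?_, ?_, ?_⟩⟩ <;>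
    linarith [hZ1.1, hZ1.2, hZ2.1, hZ2.2, hZ3.1, hZ3.2, hZ12.1, hZ12.2, hZ13.1, hZ13.2,
      hZ23.1, hZ23.2]

/-- domination of `(Z₁,Z₂,Z₃,Z₄)` by `(λ₁,λ₂,λ₃,λ₄)` under the
support conditions of the paper's `δ_{k,3}`. -/
theorem stmt13 (l1 l2 l3 l4 x1 x2 x3 Z1 Z2 Z3 Z4 s : ℝ)
    (h12 : l2 ≤ l1) (h23 : l3 ≤ l2) (h34 : l4 ≤ l3)
    (hlsum : l1 + l2 + l3 + l4 = 0)
    (hxsum : x1 + x2 + x3 = 0)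
    (hZsum : Z1 + Z2 + Z3 + Z4 = 0)
    (hs : s = (Z1 + Z2 + Z3) / 3)
    (h1 : l2 ≤ x1 + s ∧ x1 + s ≤ l1)
    (h2 : l3 ≤ x2 + s ∧ x2 + s ≤ l2)
    (h3 : l4 ≤ x3 + s ∧ x3 + s ≤ l3)
    (h4 : x3 ≤ Z1 - s ∧ Z1 - s ≤ x1)
    (h5 : x3 ≤ Z2 - s ∧ Z2 - s ≤ x1)
    (h6 : x3 ≤ Z3 - s ∧ Z3 - s ≤ x1) :
    (Z1 ≤ l1 ∧ Z2 ≤ l1 ∧ Z3 ≤ l1 ∧ Z4 ≤ l1) ∧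
    (Z1 + Z2 ≤ l1 + l2 ∧ Z1 + Z3 ≤ l1 + l2 ∧ Z1 + Z4 ≤ l1 + l2 ∧
      Z2 + Z3 ≤ l1 + l2 ∧ Z2 + Z4 ≤ l1 + l2 ∧ Z3 + Z4 ≤ l1 + l2) ∧
    (Z1 + Z2 + Z3 ≤ l1 + l2 + l3 ∧ Z1 + Z2 + Z4 ≤ l1 + l2 + l3 ∧
      Z1 + Z3 + Z4 ≤ l1 + l2 + l3 ∧ Z2 + Z3 + Z4 ≤ l1 + l2 + l3) :=
  stmt13_general l1 l2 l3 l4 x1 x2 x3 Z1 Z2 Z3 Z4 s hlsum hxsum hZsum hs h1 h2 h3 h4 h5 h6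
end

section
/- Let N ≥ 2 be a natural number. Let λ₁ ≥ λ₂ ≥ … ≥ λ_N be real numbers, let Z₁, …, Z_N be real numbers, let x₁, …, x_{N−1} be real numbers, and set s = (Z₁ + … + Z_{N−1})/(N−1). Assume: (i) λ_{i+1} ≤ xᵢ + s ≤ λᵢ for every i ∈ {1, …, N−1}; and (ii) for every subset I ⊆ {1, …, N−1}, Σ_{i ∈ I} (Zᵢ − s) ≤ Σ_{i=1}^{|I|} xᵢ. Then for every subset I ⊆ {1, …, N−1}, Σ_{i ∈ I} Zᵢ ≤ Σ_{i=1}^{|I|} λᵢ. -/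
/-!
Writing `Σ_{i∈I} Zᵢ = Σ_{i∈I} (Zᵢ - s) + |I| s`, hypothesis (ii) bounds this by
`Σ_{i<|I|} (xᵢ + s)`, and the upper half of the interlacing (i) bounds each `xᵢ + s` by `λᵢ`.
-/

open Finset

namespace Fin

theorem filter_val_lt_eq_map_castLEEmb {m n : ℕ} (h : m ≤ n) :
    univ.filter (fun j : Fin n => (j : ℕ) < m) = univ.map (castLEEmb h) := by
  ext j
  simp only [mem_filter, mem_univ, true_and, mem_map, coe_castLEEmb]
  exact ⟨fun hj => ⟨⟨j, hj⟩, rfl⟩, fun ⟨i, hi⟩ => hi ▸ i.isLt⟩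

theorem sum_filter_val_lt {M : Type*} [AddCommMonoid M] {m n : ℕ} (h : m ≤ n) (f : Fin n → M) :
    ∑ i ∈ univ.filter (fun j : Fin n => (j : ℕ) < m), f i = ∑ i : Fin m, f (castLE h i) := by
  simp [filter_val_lt_eq_map_castLEEmb h]

end Fin

/-- let `N ≥ 2`, `λ₁ ≥ … ≥ λ_N`, `Z₁,…,Z_N`, `x₁,…,x_{N−1}` real, and
`s = (Z₁+…+Z_{N−1})/(N−1)`.  If `λ_{i+1} ≤ xᵢ + s ≤ λᵢ` for all `i ≤ N−1`, and
`Σ_{i∈I} (Zᵢ − s) ≤ Σ_{i=1}^{|I|} xᵢ` for every `I ⊆ {1,…,N−1}`, then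
`Σ_{i∈I} Zᵢ ≤ Σ_{i=1}^{|I|} λᵢ` for every `I ⊆ {1,…,N−1}`.
(Indices are 0-based; "the first `m`" entries are those with index `< m`.) -/
theorem stmt14 (N : ℕ) (lam Z : Fin N → ℝ) (x : Fin (N - 1) → ℝ)
    (s : ℝ)
    (hx : ∀ i : Fin (N - 1),
      lam ⟨(i : ℕ) + 1, by have := i.isLt; omega⟩ ≤ x i + s ∧
        x i + s ≤ lam (Fin.castLE (by omega) i))
    (hZ : ∀ I : Finset (Fin (N - 1)),
      ∑ i ∈ I, (Z (Fin.castLE (by omega) i) - s) ≤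
        ∑ i ∈ Finset.univ.filter (fun j : Fin (N - 1) => (j : ℕ) < I.card), x i) :
    ∀ I : Finset (Fin (N - 1)),
      ∑ i ∈ I, Z (Fin.castLE (by omega) i) ≤
        ∑ i ∈ Finset.univ.filter (fun j : Fin N => (j : ℕ) < I.card), lam i := by
  intro I
  have hI : #I ≤ N - 1 := card_le_univ I |>.trans_eq (Fintype.card_fin _)
  calc ∑ i ∈ I, Z (Fin.castLE (N.sub_le 1) i)
      = ∑ i ∈ I, (Z (Fin.castLE (N.sub_le 1) i) - s) + #I * s := by
        simp [sum_sub_distrib]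
    _ ≤ ∑ i ∈ univ.filter (fun j : Fin (N - 1) => (j : ℕ) < #I), x i + #I * s := by
        gcongr; exact hZ I
    _ = ∑ i ∈ univ.filter (fun j : Fin (N - 1) => (j : ℕ) < #I), (x i + s) := by
        rw [sum_add_distrib, sum_const, Fin.card_filter_val_lt, min_eq_right hI, nsmul_eq_mul]
    _ ≤ ∑ i ∈ univ.filter (fun j : Fin (N - 1) => (j : ℕ) < #I),
          lam (Fin.castLE (N.sub_le 1) i) :=
        sum_le_sum fun i _ => (hx i).2
    _ = ∑ i ∈ univ.filter (fun j : Fin N => (j : ℕ) < #I), lam i := by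
        rw [Fin.sum_filter_val_lt hI, Fin.sum_filter_val_lt (hI.trans (N.sub_le 1))]
        rfl
end
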